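/- Let m₁ ≤ m₂ be positive real numbers. Let (ρ₁⁽ⁿ⁾)ₙ and (ρ₂⁽ⁿ⁾)ₙ be sequences of finite positive Borel measures on the circle Λ with ρ₁⁽ⁿ⁾(Λ) = m₁ and ρ₂⁽ⁿ⁾(Λ) = m₂, converging weakly to measures ρ₁ and ρ₂ respectively, where ρ₁ and ρ₂ are absolutely continuous with respect to Haar measure. Then the collapsed measures converge on arcs: for every half-open arc (a,b] ⊆ Λ, ρ₁⁽ⁿ⁾((a,b]) + Jⁿ(a) − Jⁿ(b) → ρ₁((a,b]) + J(a) − J(b) as n → ∞, where Jⁿ is the flux associated to the pair (ρ₁⁽ⁿ⁾, ρ₂⁽ⁿ⁾) and J the flux associated to (ρ₁, ρ₂). -/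

import Mathlib

/-
For a fixed endpoint `v`, the closed arcs `[u, v]` are exactly the sublevel sets
`{w | θ(w, v) ≤ t}`, `t ∈ [0, 1)`, of the backward distance `θ(·, v)` to `v`. Hence
`E(u, v) = G₁(θ(u, v)) - G₂(θ(u, v))`, where `Gᵢ(t)` is the `σᵢ`-mass of that sublevel set, and
`J(v)` is the supremum of `max (G₁ - G₂) 0` over `[0, 1)`. The boundary of a sublevel set consists
of at most two points, so by the portmanteau theorem `Gᵢⁿ → Gᵢ` pointwise when the limit has no
atoms; an atomless limit also makes `Gᵢ` continuous, and pointwise convergence of monotone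
functions to a continuous limit is locally uniform (Pólya). Uniform convergence on `[0, 1]`
passes to the suprema, so `Jⁿ(v) → J(v)`; the arc `(a, b]` is handled by portmanteau directly.
-/

open MeasureTheory Set Filter Topology

noncomputable section

instance fact01 : Fact ((0:ℝ) < 1) := ⟨zero_lt_one⟩

/-- The circle `ℝ/ℤ`. -/
abbrev Circle' : Type := AddCircle (1:ℝ)

/-- The angular position of `w` in the arc starting at `u`, measured positively;
a real number in `[0,1)`. -/
noncomputable def theta (u w : Circle') : ℝ := ((AddCircle.equivIco 1 0) (w - u) : ℝ)

/-- The closed arc `[u,v]` from `u` to `v` in the positive direction. -/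
def arcCC (u v : Circle') : Set Circle' := {w | theta u w ≤ theta u v}

/-- The half-open arc `(u,v]`. -/
def arcOC (u v : Circle') : Set Circle' := {w | 0 < theta u w ∧ theta u w ≤ theta u v}

/-- The half-open arc `[u,v)`. -/
def arcCO (u v : Circle') : Set Circle' := {w | theta u w < theta u v}

/-- The open arc `(u,v)`. -/
def arcOO (u v : Circle') : Set Circle' := {w | 0 < theta u w ∧ theta u w < theta u v}

/-- The excess `E(u,v) = ρ₁([u,v]) - ρ₂([u,v])`. -/
noncomputable def excess (ρ₁ ρ₂ : Measure Circle') (u v : Circle') : ℝ :=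
  (ρ₁ (arcCC u v)).toReal - (ρ₂ (arcCC u v)).toReal

/-- The flux `J(v) = sup_u max (E(u,v)) 0`. -/
noncomputable def flux (ρ₁ ρ₂ : Measure Circle') (v : Circle') : ℝ :=
  ⨆ u : Circle', max (excess ρ₁ ρ₂ u v) 0

/-- The set `𝒥 = {v | ∃ u, E(u,v) > 0}`. -/
def Jset (ρ₁ ρ₂ : Measure Circle') : Set Circle' := {v | ∃ u : Circle', 0 < excess ρ₁ ρ₂ u v}

theorem tendstoLocallyUniformly_of_monotone_of_continuous {α ι : Type*} [TopologicalSpace α]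
    [LinearOrder α] [OrderTopology α] {l : Filter ι} {F : ι → α → ℝ} {f : α → ℝ}
    (hF : ∀ n, Monotone (F n)) (hf : Continuous f) (h : ∀ x, Tendsto (F · x) l (𝓝 (f x))) :
    TendstoLocallyUniformly F f l := by
  rw [Metric.tendstoLocallyUniformly_iff]
  intro ε hε x
  obtain ⟨b, c, -, hbc, hsub⟩ := exists_Icc_mem_subset_of_mem_nhds
    (hf.continuousAt.preimage_mem_nhds (Metric.ball_mem_nhds (f x) (by positivity : 0 < ε / 4)))
  have hb : f b - ε / 4 < f b := by linarith
  have hc : f c < f c + ε / 4 := by linarith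
  refine ⟨Icc b c, hbc, ?_⟩
  filter_upwards [(h b).eventually (lt_mem_nhds hb), (h c).eventually (gt_mem_nhds hc)]
    with n hnb hnc y hy
  have hfy := hsub hy
  have hfb := hsub (left_mem_Icc.2 (hy.1.trans hy.2))
  have hfc := hsub (right_mem_Icc.2 (hy.1.trans hy.2))
  simp only [mem_preimage, Metric.mem_ball, Real.dist_eq, abs_lt] at hfy hfb hfc
  rw [Real.dist_eq, abs_lt]
  constructor <;> linarith [hF n hy.1, hF n hy.2]

theorem tendsto_ciSup_of_tendstoUniformly {ι κ : Type*} [Nonempty κ] {l : Filter ι}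
    {F : ι → κ → ℝ} {f : κ → ℝ} (hf : BddAbove (range f)) (h : TendstoUniformly F f l) :
    Tendsto (fun n => ⨆ i, F n i) l (𝓝 (⨆ i, f i)) := by
  rw [Metric.tendsto_nhds]
  intro ε hε
  filter_upwards [Metric.tendstoUniformly_iff.1 h (ε / 2) (by positivity)] with n hn
  have hlt : ∀ i, |f i - F n i| < ε / 2 := fun i => by simpa [Real.dist_eq] using hn i
  have hFn : ∀ i, F n i ≤ (⨆ i, f i) + ε / 2 := fun i => by
    linarith [(abs_lt.1 (hlt i)).1, le_ciSup hf i]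
  have hle₁ : (⨆ i, F n i) ≤ (⨆ i, f i) + ε / 2 := ciSup_le hFn
  have hle₂ : (⨆ i, f i) ≤ (⨆ i, F n i) + ε / 2 := ciSup_le fun i => by
    linarith [(abs_lt.1 (hlt i)).2, le_ciSup ⟨_, forall_mem_range.2 hFn⟩ i]
  rw [Real.dist_eq, abs_lt]
  constructor <;> linarith

theorem continuous_measureReal_Iic (ν : Measure ℝ) [IsFiniteMeasure ν] [NullSingletonClass ν] :
    Continuous fun t => ν.real (Iic t) := by
  have hmono : Monotone fun t => ν.real (Iic t) := fun s t hst =>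
    measureReal_mono (Iic_subset_Iic.2 hst)
  rw [continuous_iff_continuousAt]
  intro s
  rw [ContinuousAt, tendsto_iff_dist_tendsto_zero]
  have hbound : ∀ t, dist (ν.real (Iic t)) (ν.real (Iic s)) ≤
      ν.real (Icc (s - |t - s|) (s + |t - s|)) := by
    intro t
    have hδ := abs_nonneg (t - s)
    have hlo := hmono (show s - |t - s| ≤ t by linarith [neg_abs_le (t - s)])
    have hhi := hmono (show t ≤ s + |t - s| by linarith [le_abs_self (t - s)])
    have hlo' := hmono (show s - |t - s| ≤ s by linarith)
    have hhi' := hmono (show s ≤ s + |t - s| by linarith)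
    have hIoc : ν.real (Iic (s + |t - s|)) - ν.real (Iic (s - |t - s|)) =
        ν.real (Ioc (s - |t - s|) (s + |t - s|)) := by
      rw [← Iic_sdiff_Iic, measureReal_sdiff (Iic_subset_Iic.2 (by linarith)) measurableSet_Iic]
    have hIcc := measureReal_mono (μ := ν)
      (Ioc_subset_Icc_self (a := s - |t - s|) (b := s + |t - s|))
    simp only at hlo hhi hlo' hhi'
    rw [Real.dist_eq, abs_le]
    constructor <;> linarith
  have hlim : Tendsto (fun t => ν.real (Icc (s - |t - s|) (s + |t - s|))) (𝓝 s) (𝓝 0) := by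
    have h0 : Tendsto (fun t : ℝ => |t - s|) (𝓝 s) (𝓝 0) := by
      simpa using (continuous_sub_right s).abs.tendsto s
    simpa [Function.comp_def, Measure.real] using
      (ENNReal.tendsto_toReal ENNReal.zero_ne_top).comp ((tendsto_measure_Icc ν s).comp h0)
  exact squeeze_zero (fun _ => dist_nonneg) hbound hlim

theorem tendsto_measureReal_of_null_frontier_of_forall_integral_tendsto {Ω ι : Type*}
    [MeasurableSpace Ω] [TopologicalSpace Ω] [OpensMeasurableSpace Ω] [HasOuterApproxClosed Ω]
    [Nonempty Ω] {L : Filter ι} {μ : Measure Ω} [IsFiniteMeasure μ] {μs : ι → Measure Ω}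
    [∀ i, IsFiniteMeasure (μs i)]
    (h : ∀ f : BoundedContinuousFunction Ω ℝ,
      Tendsto (fun i => ∫ x, f x ∂(μs i)) L (𝓝 (∫ x, f x ∂μ)))
    {E : Set Ω} (hE : μ (frontier E) = 0) :
    Tendsto (fun i => (μs i).real E) L (𝓝 (μ.real E)) := by
  let μF : FiniteMeasure Ω := ⟨μ, inferInstance⟩
  let μsF : ι → FiniteMeasure Ω := fun i => ⟨μs i, inferInstance⟩
  have hT : Tendsto μsF L (𝓝 μF) := FiniteMeasure.tendsto_iff_forall_integral_tendsto.2 h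
  suffices Tendsto (fun i => μsF i E) L (𝓝 (μF E)) from
    (NNReal.continuous_coe.tendsto _).comp this
  rcases eq_or_ne μF 0 with h0 | h0
  · have hmass := hT.mass
    rw [h0] at hmass ⊢
    exact tendsto_of_tendsto_of_tendsto_of_le_of_le tendsto_const_nhds (by simpa using hmass)
      (fun _ => zero_le) (fun i => (μsF i).apply_le_mass E)
  · -- Away from the zero measure, weak convergence is that of the masses and of the normalizations.
    simp_rw [FiniteMeasure.self_eq_mass_mul_normalize _ E]
    refine hT.mass.mul (ProbabilityMeasure.tendsto_measure_of_null_frontier_of_tendsto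
      (FiniteMeasure.tendsto_normalize_of_tendsto hT h0) ?_)
    rw [FiniteMeasure.normalize_eq_of_nonzero _ h0]
    simp [μF, hE]

theorem MeasureTheory.Measure.AbsolutelyContinuous.nullSingletonClass {α : Type*}
    [MeasurableSpace α] {μ ν : Measure α} [NullSingletonClass ν] (h : μ ≪ ν) :
    NullSingletonClass μ :=
  ⟨fun x => h (measure_singleton x)⟩

instance : NullSingletonClass (volume : Measure Circle') :=
  ⟨fun x => by simpa using AddCircle.volume_closedBall 1 (x := x) 0⟩

lemma coe_theta (u w : Circle') : ((theta u w : ℝ) : Circle') = w - u :=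
  AddCircle.coe_equivIco

lemma theta_mem_Ico (u w : Circle') : theta u w ∈ Ico (0 : ℝ) 1 := by
  simpa [theta] using (AddCircle.equivIco 1 0 (w - u)).2

lemma theta_eq_zero_iff {u w : Circle'} : theta u w = 0 ↔ w = u := by
  rw [← AddCircle.coe_eq_zero_iff_of_mem_Ico (theta_mem_Ico u w), coe_theta, sub_eq_zero]

lemma injective_theta_left (v : Circle') : Function.Injective fun w => theta w v := by
  intro w w' h
  simpa [coe_theta] using congrArg (fun t : ℝ => v - (t : Circle')) h

lemma measurable_theta_left (v : Circle') : Measurable fun w => theta w v :=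
  measurable_subtype_coe.comp
    ((AddCircle.measurableEquivIco 1 0).measurable.comp (measurable_const.sub measurable_id))

lemma continuousAt_theta_left {w v : Circle'} (h : w ≠ v) :
    ContinuousAt (fun x => theta x v) w := by
  have hvw : v - w ≠ ((0 : ℝ) : Circle') := by simpa [sub_eq_zero] using h.symm
  exact continuous_subtype_val.continuousAt.comp <|
    (AddCircle.continuousAt_equivIco 1 0 hvw).comp (continuous_const.sub continuous_id).continuousAt

lemma arcCC_eq_setOf_theta_le (u v : Circle') : arcCC u v = {w | theta w v ≤ theta u v} := by
  ext w
  obtain ⟨ha₀, ha₁⟩ := theta_mem_Ico u w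
  obtain ⟨hb₀, hb₁⟩ := theta_mem_Ico w v
  obtain ⟨hc₀, hc₁⟩ := theta_mem_Ico u v
  -- `θ(u,w) + θ(w,v) - θ(u,v)` is an integer in `(-1, 2)`:
  -- it is `0` for `w ∈ [u,v]` and `1` otherwise.
  have hcoe : ((theta u w + theta w v - theta u v : ℝ) : Circle') = 0 := by
    rw [AddCircle.coe_sub, AddCircle.coe_add, coe_theta, coe_theta, coe_theta]
    abel
  obtain ⟨n, hn⟩ := (AddCircle.coe_eq_zero_iff _).1 hcoe
  simp only [zsmul_eq_mul, mul_one] at hn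
  have hn₀ : -1 < n := by exact_mod_cast (show (-1 : ℝ) < n by linarith)
  have hn₁ : n < 2 := by exact_mod_cast (show (n : ℝ) < 2 by linarith)
  simp only [arcCC, mem_ofPred_eq]
  interval_cases n <;> simp at hn <;> constructor <;> intro <;> linarith

lemma arcOC_eq_arcCC_diff (u v : Circle') : arcOC u v = arcCC u v \ {u} := by
  ext w
  simp only [arcOC, arcCC, Set.mem_sdiff, mem_ofPred_eq, mem_singleton_iff, ← theta_eq_zero_iff,
    (theta_mem_Ico u w).1.lt_iff_ne', and_comm]

lemma frontier_setOf_theta_le_subset (v : Circle') (t : ℝ) :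
    frontier {w | theta w v ≤ t} ⊆ insert v {w | theta w v = t} := by
  intro w hw
  by_cases hwv : w = v
  · exact Or.inl hwv
  have hc := continuousAt_theta_left hwv
  refine Or.inr (le_antisymm ?_ ?_)
  · by_contra! hlt
    obtain ⟨x, hx, hx'⟩ := (mem_closure_iff_frequently.1 hw.1).and_eventually
      (hc.eventually (lt_mem_nhds hlt)) |>.exists
    exact (hx.trans_lt hx').false
  · by_contra! hlt
    exact hw.2 <| mem_interior_iff_mem_nhds.2 <|
      (hc.eventually (gt_mem_nhds hlt)).mono fun _ => le_of_lt

lemma frontier_arcOC_subset (u v : Circle') :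
    frontier (arcOC u v) ⊆ insert u (insert v {w | theta w v = theta u v}) := by
  rw [arcOC_eq_arcCC_diff, sdiff_eq, arcCC_eq_setOf_theta_le]
  refine (frontier_inter_subset _ _).trans (union_subset ?_ ?_)
  · exact inter_subset_left.trans ((frontier_setOf_theta_le_subset v _).trans (subset_insert _ _))
  · rw [frontier_compl]
    exact inter_subset_right.trans (frontier_subset_closure.trans (by simp))

lemma countable_setOf_theta_eq (v : Circle') (t : ℝ) : {w | theta w v = t}.Countable :=
  (subsingleton_singleton.preimage (injective_theta_left v)).countable

/-- The mass of the closed arc `[v - t, v]` of length `t ∈ [0, 1)` ending at `v` (empty for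
`t < 0`, the whole circle for `t ≥ 1`). -/
def massBehind (μ : Measure Circle') (v : Circle') (t : ℝ) : ℝ := μ.real {w | theta w v ≤ t}

lemma excess_eq_massBehind_sub (μ₁ μ₂ : Measure Circle') (u v : Circle') :
    excess μ₁ μ₂ u v = massBehind μ₁ v (theta u v) - massBehind μ₂ v (theta u v) := by
  rw [excess, arcCC_eq_setOf_theta_le]
  rfl

lemma monotone_massBehind (μ : Measure Circle') [IsFiniteMeasure μ] (v : Circle') :
    Monotone (massBehind μ v) :=
  fun _ _ hst => measureReal_mono fun _ hw => le_trans hw hst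

lemma continuous_massBehind (μ : Measure Circle') [IsFiniteMeasure μ] [NullSingletonClass μ]
    (v : Circle') : Continuous (massBehind μ v) := by
  have hmap : ∀ s, MeasurableSet s →
      μ.map (fun w => theta w v) s = μ ((fun w => theta w v) ⁻¹' s) :=
    fun _ => Measure.map_apply (measurable_theta_left v)
  have : NullSingletonClass (μ.map fun w => theta w v) := ⟨fun t => by
    rw [hmap _ (measurableSet_singleton t)]
    exact (countable_setOf_theta_eq v t).measure_zero μ⟩
  convert continuous_measureReal_Iic (μ.map fun w => theta w v) using 2 with t
  rw [measureReal_def, hmap _ measurableSet_Iic]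
  rfl

lemma tendsto_massBehind {μs : ℕ → Measure Circle'} [∀ n, IsFiniteMeasure (μs n)]
    {μ : Measure Circle'} [IsFiniteMeasure μ] [NullSingletonClass μ]
    (hw : ∀ f : BoundedContinuousFunction Circle' ℝ,
      Tendsto (fun n => ∫ x, f x ∂(μs n)) atTop (𝓝 (∫ x, f x ∂μ)))
    (v : Circle') (t : ℝ) :
    Tendsto (fun n => massBehind (μs n) v t) atTop (𝓝 (massBehind μ v t)) :=
  tendsto_measureReal_of_null_frontier_of_forall_integral_tendsto hw <|
    measure_mono_null (frontier_setOf_theta_le_subset v t)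
      (((countable_setOf_theta_eq v t).insert v).measure_zero μ)

lemma tendstoUniformlyOn_massBehind {μs : ℕ → Measure Circle'} [∀ n, IsFiniteMeasure (μs n)]
    {μ : Measure Circle'} [IsFiniteMeasure μ] [NullSingletonClass μ]
    (hw : ∀ f : BoundedContinuousFunction Circle' ℝ,
      Tendsto (fun n => ∫ x, f x ∂(μs n)) atTop (𝓝 (∫ x, f x ∂μ)))
    (v : Circle') :
    TendstoUniformlyOn (fun n => massBehind (μs n) v) (massBehind μ v) atTop (Icc 0 1) :=
  tendstoLocallyUniformly_iff_forall_isCompact.1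
    (tendstoLocallyUniformly_of_monotone_of_continuous (fun n => monotone_massBehind (μs n) v)
      (continuous_massBehind μ v) (tendsto_massBehind hw v)) _ isCompact_Icc

theorem tendsto_flux {ρ₁ ρ₂ : ℕ → Measure Circle'}
    [∀ n, IsFiniteMeasure (ρ₁ n)] [∀ n, IsFiniteMeasure (ρ₂ n)]
    {σ₁ σ₂ : Measure Circle'} [IsFiniteMeasure σ₁] [IsFiniteMeasure σ₂]
    [NullSingletonClass σ₁] [NullSingletonClass σ₂]
    (hw₁ : ∀ f : BoundedContinuousFunction Circle' ℝ,
      Tendsto (fun n => ∫ x, f x ∂(ρ₁ n)) atTop (𝓝 (∫ x, f x ∂σ₁)))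
    (hw₂ : ∀ f : BoundedContinuousFunction Circle' ℝ,
      Tendsto (fun n => ∫ x, f x ∂(ρ₂ n)) atTop (𝓝 (∫ x, f x ∂σ₂)))
    (v : Circle') :
    Tendsto (fun n => flux (ρ₁ n) (ρ₂ n) v) atTop (𝓝 (flux σ₁ σ₂ v)) := by
  set g : ℝ → ℝ := fun t => max (massBehind σ₁ v t - massBehind σ₂ v t) 0
  have hg : Continuous g :=
    ((continuous_massBehind σ₁ v).sub (continuous_massBehind σ₂ v)).max continuous_const
  have hunif := ((LipschitzWith.id.max_const 0).uniformContinuous.comp_tendstoUniformlyOn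
    ((tendstoUniformlyOn_massBehind hw₁ v).sub (tendstoUniformlyOn_massBehind hw₂ v))).comp
    fun u => theta u v
  have hpre : (fun u => theta u v) ⁻¹' Icc 0 1 = univ :=
    eq_univ_of_forall fun u => Ico_subset_Icc_self (theta_mem_Ico u v)
  rw [hpre, tendstoUniformlyOn_univ] at hunif
  have hbdd : BddAbove (range fun u => g (theta u v)) :=
    (isCompact_Icc.image hg).bddAbove.mono
      (range_subset_iff.2 fun u => mem_image_of_mem g (Ico_subset_Icc_self (theta_mem_Ico u v)))
  simp only [flux, excess_eq_massBehind_sub]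
  exact tendsto_ciSup_of_tendstoUniformly hbdd hunif

theorem stmt10_general
    (ρ₁ ρ₂ : ℕ → Measure Circle')
    [∀ n, IsFiniteMeasure (ρ₁ n)] [∀ n, IsFiniteMeasure (ρ₂ n)]
    (σ₁ σ₂ : Measure Circle') [IsFiniteMeasure σ₁] [IsFiniteMeasure σ₂]
    (hac₁ : σ₁ ≪ (volume : Measure Circle')) (hac₂ : σ₂ ≪ (volume : Measure Circle'))
    (hw₁ : ∀ f : BoundedContinuousFunction Circle' ℝ,
      Filter.Tendsto (fun n => ∫ x, f x ∂(ρ₁ n)) Filter.atTop (nhds (∫ x, f x ∂σ₁)))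
    (hw₂ : ∀ f : BoundedContinuousFunction Circle' ℝ,
      Filter.Tendsto (fun n => ∫ x, f x ∂(ρ₂ n)) Filter.atTop (nhds (∫ x, f x ∂σ₂))) :
    ∀ a b : Circle',
      Filter.Tendsto
        (fun n => (ρ₁ n (arcOC a b)).toReal + flux (ρ₁ n) (ρ₂ n) a - flux (ρ₁ n) (ρ₂ n) b)
        Filter.atTop
        (nhds ((σ₁ (arcOC a b)).toReal + flux σ₁ σ₂ a - flux σ₁ σ₂ b)) := by
  have := hac₁.nullSingletonClass
  have := hac₂.nullSingletonClass
  intro a b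
  have harc : Tendsto (fun n => (ρ₁ n).real (arcOC a b)) atTop (𝓝 (σ₁.real (arcOC a b))) :=
    tendsto_measureReal_of_null_frontier_of_forall_integral_tendsto hw₁ <|
      measure_mono_null (frontier_arcOC_subset a b)
        ((((countable_setOf_theta_eq b _).insert b).insert a).measure_zero σ₁)
  exact (harc.add (tendsto_flux hw₁ hw₂ a)).sub (tendsto_flux hw₁ hw₂ b)

/-- convergence of the collapsed measures on half-open arcs, under weak
convergence of the measures towards absolutely continuous limits. -/
theorem stmt10 (m₁ m₂ : ℝ) (hm₁ : 0 < m₁) (hm₂ : 0 < m₂) (hm : m₁ ≤ m₂)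
    (ρ₁ ρ₂ : ℕ → Measure Circle')
    [∀ n, IsFiniteMeasure (ρ₁ n)] [∀ n, IsFiniteMeasure (ρ₂ n)]
    (hmass₁ : ∀ n, ρ₁ n Set.univ = ENNReal.ofReal m₁)
    (hmass₂ : ∀ n, ρ₂ n Set.univ = ENNReal.ofReal m₂)
    (σ₁ σ₂ : Measure Circle') [IsFiniteMeasure σ₁] [IsFiniteMeasure σ₂]
    (hac₁ : σ₁ ≪ (volume : Measure Circle')) (hac₂ : σ₂ ≪ (volume : Measure Circle'))
    (hw₁ : ∀ f : BoundedContinuousFunction Circle' ℝ,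
      Filter.Tendsto (fun n => ∫ x, f x ∂(ρ₁ n)) Filter.atTop (nhds (∫ x, f x ∂σ₁)))
    (hw₂ : ∀ f : BoundedContinuousFunction Circle' ℝ,
      Filter.Tendsto (fun n => ∫ x, f x ∂(ρ₂ n)) Filter.atTop (nhds (∫ x, f x ∂σ₂))) :
    ∀ a b : Circle',
      Filter.Tendsto
        (fun n => (ρ₁ n (arcOC a b)).toReal + flux (ρ₁ n) (ρ₂ n) a - flux (ρ₁ n) (ρ₂ n) b)
        Filter.atTop
        (nhds ((σ₁ (arcOC a b)).toReal + flux σ₁ σ₂ a - flux σ₁ σ₂ b)) :=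
  stmt10_general ρ₁ ρ₂ σ₁ σ₂ hac₁ hac₂ hw₁ hw₂

end
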